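/- Validity of the third tightening inequality (A.3): Let 0 ≤ P_min ≤ P_max, R ≥ 0, R̄ ≥ 0 be real parameters. Let u₀, u₁ ∈ {0,1}, y ∈ ℝ with 0 ≤ y, y ≥ u₁ − u₀, y ≤ u₁, y ≤ 1 − u₀, and let p₀, p₁ ∈ ℝ satisfy P_min·u_s ≤ p_s ≤ P_max·u_s for s ∈ {0,1}, p₁ − p₀ ≤ R·u₀ + R̄·(1 − u₀), and p₀ − p₁ ≤ R·u₁ + R̄·(1 − u₁). Then p₁ − p₀ ≤ (P_min + R)·u₁ − P_min·u₀ − (P_min + R − R̄)·y. -/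

import Mathlib

/-!
For binary commitments the startup constraints pin the startup indicator to `y = u₁ (1 - u₀)`.
After this substitution, (A.3) is the ramp-up limit when `u₁ = 1`, and when `u₁ = 0` (so `p₁ ≤ 0`)
it is the lower output bound `P_min u₀ ≤ p₀`.
-/

theorem startup_eq_mul_one_sub {u0 u1 y : ℝ} (hu0 : u0 = 0 ∨ u0 = 1) (hu1 : u1 = 0 ∨ u1 = 1)
    (hy_nonneg : 0 ≤ y) (hy_trans : u1 - u0 ≤ y) (hy_up : y ≤ u1) (hy_down : y ≤ 1 - u0) :
    y = u1 * (1 - u0) := by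
  rcases hu0 with rfl | rfl <;> rcases hu1 with rfl | rfl <;> norm_num at * <;> linarith

theorem tightening_A3_general
    (Pmin Pmax R Rb u0 u1 y p0 p1 : ℝ)
    (hu0 : u0 = 0 ∨ u0 = 1) (hu1 : u1 = 0 ∨ u1 = 1)
    (hy_nonneg : 0 ≤ y) (hy_trans : u1 - u0 ≤ y)
    (hy_up : y ≤ u1) (hy_down : y ≤ 1 - u0)
    (hp0_lb : Pmin * u0 ≤ p0)
    (hp1_ub : p1 ≤ Pmax * u1)
    (hramp_up : p1 - p0 ≤ R * u0 + Rb * (1 - u0)) :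
    p1 - p0 ≤ (Pmin + R) * u1 - Pmin * u0 - (Pmin + R - Rb) * y := by
  obtain rfl := startup_eq_mul_one_sub hu0 hu1 hy_nonneg hy_trans hy_up hy_down
  rcases hu1 with rfl | rfl
  · linear_combination hp1_ub + hp0_lb
  · linear_combination hramp_up

/-- validity of tightening inequality (A.3). -/
theorem tightening_A3
    (Pmin Pmax R Rb u0 u1 y p0 p1 : ℝ)
    (hPmin : 0 ≤ Pmin) (hPP : Pmin ≤ Pmax) (hR : 0 ≤ R) (hRb : 0 ≤ Rb)
    (hu0 : u0 = 0 ∨ u0 = 1) (hu1 : u1 = 0 ∨ u1 = 1)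
    (hy_nonneg : 0 ≤ y) (hy_trans : u1 - u0 ≤ y)
    (hy_up : y ≤ u1) (hy_down : y ≤ 1 - u0)
    (hp0_lb : Pmin * u0 ≤ p0) (hp0_ub : p0 ≤ Pmax * u0)
    (hp1_lb : Pmin * u1 ≤ p1) (hp1_ub : p1 ≤ Pmax * u1)
    (hramp_up : p1 - p0 ≤ R * u0 + Rb * (1 - u0))
    (hramp_dn : p0 - p1 ≤ R * u1 + Rb * (1 - u1)) :
    p1 - p0 ≤ (Pmin + R) * u1 - Pmin * u0 - (Pmin + R - Rb) * y :=
  tightening_A3_general Pmin Pmax R Rb u0 u1 y p0 p1 hu0 hu1 hy_nonneg hy_trans hy_up hy_down hp0_lb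
    hp1_ub hramp_up
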